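/- For any finite set ℬ of gradient directions, positive scalars S̄_b, and vectors x_b ∈ ℝ⁶ such that Σ_b x_b x_b^T is invertible, the asymptotic covariance of the nonlinear regression estimator is dominated by that of the linear estimator: (Σ_b S̄_b² x_b x_b^T)⁻¹ ⪯ (Σ_b x_b x_b^T)⁻¹ (Σ_b S̄_b^{−2} x_b x_b^T)(Σ_b x_b x_b^T)⁻¹ in the positive semidefinite order (assuming both sums Σ S̄_b² x_b x_b^T and Σ x_b x_b^T are invertible). -/

import Mathlib

/-!
With `A = ∑ x_b x_bᵀ`, `M = ∑ S_b² x_b x_bᵀ` and `N = ∑ S_b⁻² x_b x_bᵀ`, the block matrix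
`[[M, A], [A, N]]` is positive semidefinite, being a sum of the rank-one matrices `y_b y_bᵀ` with
`y_b = (S_b x_b, S_b⁻¹ x_b)`. Its Schur complement `N - A M⁻¹ A` is then positive semidefinite,
and conjugating it by `A⁻¹` gives `A⁻¹ N A⁻¹ - M⁻¹`.
-/

open Matrix

namespace Matrix

variable {ι l m n o α : Type*}

theorem fromBlocks_sum [AddCommMonoid α] (s : Finset ι) (A : ι → Matrix n l α)
    (B : ι → Matrix n m α) (C : ι → Matrix o l α) (D : ι → Matrix o m α) :
    fromBlocks (∑ i ∈ s, A i) (∑ i ∈ s, B i) (∑ i ∈ s, C i) (∑ i ∈ s, D i)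
      = ∑ i ∈ s, fromBlocks (A i) (B i) (C i) (D i) := by
  ext (i | i) (j | j) <;> simp [sum_apply]

theorem posSemidef_fromBlocks_smul_vecMulVec [Finite n] {s : ℝ} (hs : s ≠ 0) (v : n → ℝ) :
    (fromBlocks (s ^ 2 • vecMulVec v v) (vecMulVec v v) (vecMulVec v v)
      ((s ^ 2)⁻¹ • vecMulVec v v)).PosSemidef := by
  have hy : fromBlocks (s ^ 2 • vecMulVec v v) (vecMulVec v v) (vecMulVec v v)
      ((s ^ 2)⁻¹ • vecMulVec v v)
        = vecMulVec (Sum.elim (s • v) (s⁻¹ • v)) (Sum.elim (s • v) (s⁻¹ • v)) := by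
    ext (i | i) (j | j) <;> simp [vecMulVec_apply] <;> field_simp
  simpa [hy] using posSemidef_vecMulVec_self_star (Sum.elim (s • v) (s⁻¹ • v))

theorem PosSemidef.conjTranspose_inv_mul_mul_inv_sub_inv_of_fromBlocks {K : Type*} [Field K]
    [PartialOrder K] [StarRing K] [StarOrderedRing K] [Fintype n] [DecidableEq n]
    {M A N : Matrix n n K} (hM : M.PosDef) (hA : IsUnit A.det)
    (h : (fromBlocks M A Aᴴ N).PosSemidef) : (A⁻¹ᴴ * N * A⁻¹ - M⁻¹).PosSemidef := by
  have := hM.isUnit.invertible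
  have hschur := ((PosDef.fromBlocks₁₁ A N hM).mp h).conjTranspose_mul_mul_same A⁻¹
  have hAA : A * A⁻¹ = 1 := mul_nonsing_inv A hA
  have hAA_star : A⁻¹ᴴ * Aᴴ = 1 := by rw [← conjTranspose_mul, hAA, conjTranspose_one]
  have hconj : A⁻¹ᴴ * (N - Aᴴ * M⁻¹ * A) * A⁻¹ = A⁻¹ᴴ * N * A⁻¹ - M⁻¹ := by
    simp only [Matrix.mul_sub, Matrix.sub_mul, ← Matrix.mul_assoc, hAA_star, Matrix.one_mul]
    simp only [Matrix.mul_assoc, hAA, Matrix.mul_one]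
  rwa [hconj] at hschur

end Matrix

/-- For a finite set `ℬ` of gradient directions, positive scalars `S̄ b`
and vectors `x b ∈ ℝ⁶` such that `∑ b, x_b x_bᵀ` and `∑ b, S̄_b² x_b x_bᵀ` are invertible,
the asymptotic covariance of the nonlinear regression estimator is dominated, in the
Loewner (positive semidefinite) order, by that of the linear estimator:
`(∑ b, S̄_b² x_b x_bᵀ)⁻¹ ⪯ (∑ b, x_b x_bᵀ)⁻¹ (∑ b, S̄_b⁻² x_b x_bᵀ) (∑ b, x_b x_bᵀ)⁻¹`. -/
theorem nonlinear_vs_linear_asymptotic_covariance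
    {B : Type*} [Fintype B]
    (S : B → ℝ) (hS : ∀ b, 0 < S b) (x : B → Fin 6 → ℝ)
    (hA : IsUnit (∑ b, vecMulVec (x b) (x b)).det)
    (hM : IsUnit (∑ b, (S b) ^ 2 • vecMulVec (x b) (x b)).det) :
    ((∑ b, vecMulVec (x b) (x b))⁻¹
        * (∑ b, ((S b) ^ 2)⁻¹ • vecMulVec (x b) (x b))
        * (∑ b, vecMulVec (x b) (x b))⁻¹
      - (∑ b, (S b) ^ 2 • vecMulVec (x b) (x b))⁻¹).PosSemidef := by
  set A : Matrix (Fin 6) (Fin 6) ℝ := ∑ b, vecMulVec (x b) (x b)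
  set M : Matrix (Fin 6) (Fin 6) ℝ := ∑ b, (S b) ^ 2 • vecMulVec (x b) (x b)
  set N : Matrix (Fin 6) (Fin 6) ℝ := ∑ b, ((S b) ^ 2)⁻¹ • vecMulVec (x b) (x b)
  have hxx : ∀ b, (vecMulVec (x b) (x b)).PosSemidef := fun b => by
    simpa using posSemidef_vecMulVec_self_star (x b)
  have hAH : A.IsHermitian := (posSemidef_sum _ fun b _ => hxx b).isHermitian
  have hMpos : M.PosDef :=
    (posSemidef_sum _ fun b _ => (hxx b).smul (sq_nonneg (S b))).posDef_iff_isUnit.mpr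
      ((isUnit_iff_isUnit_det M).mpr hM)
  have hblock : (fromBlocks M A Aᴴ N).PosSemidef := by
    rw [hAH.eq, fromBlocks_sum]
    exact posSemidef_sum _ fun b _ => posSemidef_fromBlocks_smul_vecMulVec (hS b).ne' (x b)
  simpa only [hAH.inv.eq] using
    PosSemidef.conjTranspose_inv_mul_mul_inv_sub_inv_of_fromBlocks hMpos hA hblock
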